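/- If a PCFG is unambiguous (every complete production has a unique derivation) then the expansion relation, which replaces the leftmost hole of a partial production by a rule instance, induces a tree on partial productions: every partial production reachable from the root ? is reached by a unique expansion path, i.e., every node other than the root has a unique predecessor under the expansion relation. -/

import Mathlib

/-- Extract a `Chain'` list from root to a target. -/
lemma chain'_of_rtg {E : Type} {step : E → E → Prop} {a b : E}
    (h : Relation.ReflTransGen step a b) :
    ∃ l, List.Chain' step (a :: l) ∧ (a :: l).getLast (List.cons_ne_nil _ _) = b := by
  obtain ⟨l, hl, hlast⟩ := List.exists_isChain_cons_of_relationReflTransGen h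
  exact ⟨l, hl, hlast⟩

/-- If a PCFG is unambiguous, then the (leftmost-hole) expansion
relation `step` induces a tree on partial productions.  Every partial production is
reachable from the root `?` (the empty partial production), every partial production
extends to some complete production, and unambiguity says that each complete
production `c` is reached from the root by a unique expansion path (a `step`-chain
starting at the root and ending at `c`).  Then every partial production other than the
root has a unique predecessor under the expansion relation — equivalently, every node
reachable from the root is reached by a unique expansion path. -/
theorem stmt_17 {E : Type} (step : E → E → Prop) (root : E) (complete : E → Prop)
    (hreach : ∀ e : E, Relation.ReflTransGen step root e)
    (hcompl : ∀ e : E, ∃ c, complete c ∧ Relation.ReflTransGen step e c)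
    (hunamb : ∀ c, complete c → ∀ p q : List E,
      List.Chain' step (root :: p) → List.Chain' step (root :: q) →
      (root :: p).getLast (List.cons_ne_nil _ _) = c →
      (root :: q).getLast (List.cons_ne_nil _ _) = c → p = q) :
    ∀ e : E, e ≠ root → ∃! e', step e' e := by
  intro e he
  -- existence of a predecessor
  rcases (hreach e).cases_tail with h | ⟨a, _, ha⟩
  · exact absurd h he
  refine ⟨a, ha, ?_⟩
  -- uniqueness
  intro b hb
  obtain ⟨c, hc, hec⟩ := hcompl e
  obtain ⟨T, hT, hTlast⟩ := chain'_of_rtg hec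
  obtain ⟨Pa, hPa, hPalast⟩ := chain'_of_rtg (hreach b)
  obtain ⟨Pb, hPb, hPblast⟩ := chain'_of_rtg (hreach a)
  -- build full chains  root :: (Pa ++ e :: T)  and  root :: (Pb ++ e :: T)
  have key : ∀ (P : List E) (x : E), List.Chain' step (root :: P) →
      (root :: P).getLast (List.cons_ne_nil _ _) = x → step x e →
      List.Chain' step (root :: (P ++ e :: T)) ∧
      (root :: (P ++ e :: T)).getLast (List.cons_ne_nil _ _) = c := by
    intro P x hP hPlast hxe
    have h1 : root :: (P ++ e :: T) = (root :: P) ++ (e :: T) := by simp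
    constructor
    · rw [h1]
      refine List.IsChain.append hP hT ?_
      intro u hu v hv
      have hu' : u = x := by
        have := List.getLast?_eq_getLast (l := root :: P) (List.cons_ne_nil _ _)
        rw [this, hPlast] at hu
        exact (Option.mem_some_iff.mp hu).symm
      have hv' : v = e := by
        have := hv; simp at this; exact this.symm
      rw [hu', hv']; exact hxe
    · have h2 : ((root :: P) ++ (e :: T)).getLast
          (List.append_ne_nil_of_right_ne_nil _ (List.cons_ne_nil _ _)) = c := by
        rw [List.getLast_append_of_ne_nil (l := root :: P) _ (List.cons_ne_nil e T)]
        exact hTlast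
      simpa using h2
  obtain ⟨hca, hcalast⟩ := key Pa b hPa hPalast hb
  obtain ⟨hcb, hcblast⟩ := key Pb a hPb hPblast ha
  have heq := hunamb c hc _ _ hca hcb hcalast hcblast
  have hPP : Pa = Pb := List.append_cancel_right heq
  rw [hPalast.symm, hPblast.symm, hPP]
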